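/- Let s ∈ {0,1}^N be a sampling pattern with support S, m = ‖s‖₀ ones, 0 < m < N, on a connected weighted graph. Then vol(S^c) ≤ vol(G) − m(1 − m/N)²/R_s, where R_s = (1/m) Σ_{ℓ=2}^N ŝ(ℓ)²/μ_ℓ is the redness of s. -/
import Mathlib


open Finset Matrix

/-- Complement-volume bound: for a binary sampling pattern `s` with support `S` and `m`
ones, `vol(Sᶜ) ≤ vol(G) - m(1-m/N)²/R_s`, where `R_s = (1/m) ∑_{ℓ≥2} ŝ(ℓ)²/μ_ℓ`. -/
theorem stmt_14 {N : ℕ} (hN : 2 ≤ N)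
    (W : Matrix (Fin N) (Fin N) ℝ)
    (hWsymm : W.IsSymm)
    (hWnonneg : ∀ u v, 0 ≤ W u v)
    (hWdiag : ∀ u, W u u = 0)
    (L : Matrix (Fin N) (Fin N) ℝ)
    (hL : L = Matrix.diagonal (fun u => ∑ v, W u v) - W)
    (μ : Fin N → ℝ) (U : Matrix (Fin N) (Fin N) ℝ)
    (hU : Uᵀ * U = 1)
    (hμmono : Monotone μ)
    (hμ0 : μ (⟨0, by omega⟩ : Fin N) = 0)
    (hμ2 : 0 < μ (⟨1, by omega⟩ : Fin N))
    (hU0 : ∀ i, U i (⟨0, by omega⟩ : Fin N) = 1 / Real.sqrt N)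
    (heig : ∀ ℓ, L.mulVec (fun i => U i ℓ) = μ ℓ • (fun i => U i ℓ))
    (S : Finset (Fin N)) (s : Fin N → ℝ)
    (hs : ∀ v, s v = if v ∈ S then 1 else 0)
    (m : ℕ) (hm : m = S.card) (hm0 : 0 < m) (hmN : m < N) :
    (∑ u ∈ Sᶜ, ∑ v, W u v) ≤
      (∑ u, ∑ v, W u v) -
        (m : ℝ) * (1 - (m : ℝ) / N) ^ 2 /
          ((1 / (m : ℝ)) *
            ∑ ℓ ∈ Finset.univ.erase (⟨0, by omega⟩ : Fin N), ((Uᵀ.mulVec s) ℓ) ^ 2 / μ ℓ) := by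
  have hN0 : (0 : ℝ) < N := by positivity
  set z : Fin N := ⟨0, by omega⟩ with hz
  set sh : Fin N → ℝ := Uᵀ.mulVec s with hsh
  have hUU : U * Uᵀ = 1 := mul_eq_one_comm.mp hU
  -- μ positive away from 0
  have hμpos : ∀ ℓ ∈ Finset.univ.erase z, 0 < μ ℓ := by
    intro ℓ hℓ
    have hne : ℓ ≠ z := (Finset.mem_erase.mp hℓ).1
    have h1 : (⟨1, by omega⟩ : Fin N) ≤ ℓ := by
      have : ℓ.val ≠ 0 := fun h => hne (Fin.ext h)
      exact Fin.mk_le_of_le_val (by omega)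
    exact lt_of_lt_of_le hμ2 (hμmono h1)
  -- sum of s = m
  have hssum : ∑ i, s i = (m : ℝ) := by
    simp only [hs, Finset.sum_ite_mem, Finset.univ_inter, Finset.sum_const, nsmul_eq_mul,
      mul_one, hm]
  have hs2 : ∀ i, s i ^ 2 = s i := by
    intro i; rw [hs]; split <;> norm_num
  have hsdot : s ⬝ᵥ s = (m : ℝ) := by
    have : s ⬝ᵥ s = ∑ i, s i ^ 2 := by simp [dotProduct, sq]
    rw [this]; simp only [hs2]; exact hssum
  -- Parseval
  have hpars : ∑ ℓ, sh ℓ ^ 2 = (m : ℝ) := by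
    have h1 : ∑ ℓ, sh ℓ ^ 2 = sh ⬝ᵥ sh := by simp [dotProduct, sq]
    have h2 : sh ⬝ᵥ sh = s ⬝ᵥ (U * Uᵀ).mulVec s := by
      calc sh ⬝ᵥ sh = (s ᵥ* U) ⬝ᵥ (Uᵀ *ᵥ s) := by rw [hsh, Matrix.mulVec_transpose]
        _ = s ⬝ᵥ (U *ᵥ (Uᵀ *ᵥ s)) := (Matrix.dotProduct_mulVec s U _).symm
        _ = s ⬝ᵥ (U * Uᵀ).mulVec s := by rw [Matrix.mulVec_mulVec]
    rw [h1, h2, hUU, Matrix.one_mulVec, hsdot]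
  -- value of sh at 0
  have hsh0 : sh z = (m : ℝ) / Real.sqrt N := by
    have : sh z = ∑ i, U i z * s i := by
      simp [hsh, Matrix.mulVec, dotProduct, Matrix.transpose_apply]
    rw [this]
    simp only [hU0]
    rw [← Finset.mul_sum, hssum, one_div, inv_mul_eq_div]
  -- value of sh(0)^2
  have hsqN : Real.sqrt N ^ 2 = (N : ℝ) := Real.sq_sqrt hN0.le
  have hsh0sq : sh z ^ 2 = (m : ℝ) ^ 2 / N := by rw [hsh0, div_pow, hsqN]
  -- energy away from 0
  have hB : ∑ ℓ ∈ Finset.univ.erase z, sh ℓ ^ 2 = (m : ℝ) * (1 - (m : ℝ) / N) := by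
    have h : ∑ ℓ ∈ Finset.univ.erase z, sh ℓ ^ 2 + sh z ^ 2 = ∑ ℓ, sh ℓ ^ 2 :=
      Finset.sum_erase_add Finset.univ (fun ℓ => sh ℓ ^ 2) (Finset.mem_univ z)
    rw [hpars, hsh0sq] at h
    have he : (m : ℝ) * (1 - (m : ℝ) / N) = (m : ℝ) - (m : ℝ) ^ 2 / N := by ring
    linarith
  -- diagonalization
  have hLU : L * U = U * Matrix.diagonal μ := by
    ext i ℓ
    have h := congrFun (heig ℓ) i
    rw [Matrix.mul_apply, Matrix.mul_diagonal, mul_comm (U i ℓ)]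
    simpa [Matrix.mulVec, dotProduct] using h
  have hLdecomp : L = U * Matrix.diagonal μ * Uᵀ := by
    calc L = L * (U * Uᵀ) := by rw [hUU, Matrix.mul_one]
      _ = (L * U) * Uᵀ := by rw [Matrix.mul_assoc]
      _ = U * Matrix.diagonal μ * Uᵀ := by rw [hLU]
  -- quadratic form in spectral coordinates
  have hQ : s ⬝ᵥ L.mulVec s = ∑ ℓ, μ ℓ * sh ℓ ^ 2 := by
    rw [hLdecomp]
    calc s ⬝ᵥ (U * Matrix.diagonal μ * Uᵀ).mulVec s
        = s ⬝ᵥ (U *ᵥ ((Matrix.diagonal μ) *ᵥ (Uᵀ *ᵥ s))) := by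
          rw [← Matrix.mulVec_mulVec, ← Matrix.mulVec_mulVec]
      _ = (s ᵥ* U) ⬝ᵥ ((Matrix.diagonal μ) *ᵥ sh) := by rw [Matrix.dotProduct_mulVec, hsh]
      _ = sh ⬝ᵥ ((Matrix.diagonal μ) *ᵥ sh) := by rw [← Matrix.mulVec_transpose, hsh]
      _ = ∑ ℓ, μ ℓ * sh ℓ ^ 2 := by
          simp only [dotProduct, Matrix.mulVec_diagonal]
          exact Finset.sum_congr rfl fun ℓ _ => by ring
  have hQerase : s ⬝ᵥ L.mulVec s = ∑ ℓ ∈ Finset.univ.erase z, μ ℓ * sh ℓ ^ 2 := by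
    rw [hQ, ← Finset.sum_erase_add _ _ (Finset.mem_univ z), hμ0]
    simp
  -- quadratic form bounded by vol(S)
  have hsnn : ∀ v, 0 ≤ s v := by intro v; rw [hs]; split <;> norm_num
  have hvolS : s ⬝ᵥ L.mulVec s ≤ ∑ u ∈ S, ∑ v, W u v := by
    rw [hL, Matrix.sub_mulVec, dotProduct_sub]
    have h1 : s ⬝ᵥ (Matrix.diagonal fun u => ∑ v, W u v).mulVec s = ∑ u ∈ S, ∑ v, W u v := by
      simp only [dotProduct, Matrix.mulVec_diagonal]
      have he : ∀ i, s i * ((∑ v, W i v) * s i) = if i ∈ S then ∑ v, W i v else 0 := by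
        intro i; rw [hs]; split <;> simp
      rw [Finset.sum_congr rfl fun i _ => he i]
      simp
    have h2 : 0 ≤ s ⬝ᵥ W.mulVec s := by
      simp only [dotProduct, Matrix.mulVec]
      apply Finset.sum_nonneg
      intro i _
      apply mul_nonneg (hsnn i)
      apply Finset.sum_nonneg
      intro j _
      exact mul_nonneg (hWnonneg i j) (hsnn j)
    linarith
  -- Cauchy–Schwarz
  set A : ℝ := ∑ ℓ ∈ Finset.univ.erase z, sh ℓ ^ 2 / μ ℓ with hA
  set Q : ℝ := ∑ ℓ ∈ Finset.univ.erase z, μ ℓ * sh ℓ ^ 2 with hQdef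
  have hCS : ((m : ℝ) * (1 - (m : ℝ) / N)) ^ 2 ≤ A * Q := by
    have h := Finset.sum_mul_sq_le_sq_mul_sq (Finset.univ.erase z)
      (fun ℓ => sh ℓ / Real.sqrt (μ ℓ)) (fun ℓ => sh ℓ * Real.sqrt (μ ℓ))
    have e1 : ∑ ℓ ∈ Finset.univ.erase z,
        (sh ℓ / Real.sqrt (μ ℓ)) * (sh ℓ * Real.sqrt (μ ℓ)) = (m : ℝ) * (1 - (m : ℝ) / N) := by
      rw [← hB]
      refine Finset.sum_congr rfl fun ℓ hℓ => ?_
      have hp := hμpos ℓ hℓ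
      have hsp : Real.sqrt (μ ℓ) ≠ 0 := ne_of_gt (Real.sqrt_pos.mpr hp)
      field_simp
    have e2 : ∑ ℓ ∈ Finset.univ.erase z, (sh ℓ / Real.sqrt (μ ℓ)) ^ 2 = A := by
      refine Finset.sum_congr rfl fun ℓ hℓ => ?_
      rw [div_pow, Real.sq_sqrt (hμpos ℓ hℓ).le]
    have e3 : ∑ ℓ ∈ Finset.univ.erase z, (sh ℓ * Real.sqrt (μ ℓ)) ^ 2 = Q := by
      refine Finset.sum_congr rfl fun ℓ hℓ => ?_
      rw [mul_pow, Real.sq_sqrt (hμpos ℓ hℓ).le]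
      ring
    rwa [e1, e2, e3] at h
  have hmpos : (0 : ℝ) < m := by exact_mod_cast hm0
  have hBpos : 0 < (m : ℝ) * (1 - (m : ℝ) / N) := by
    have h1 : (m : ℝ) / N < 1 := (div_lt_one hN0).mpr (by exact_mod_cast hmN)
    have : (0 : ℝ) < 1 - (m : ℝ) / N := by linarith
    exact mul_pos hmpos this
  have hAnn : 0 ≤ A := Finset.sum_nonneg fun ℓ hℓ =>
    div_nonneg (sq_nonneg _) (hμpos ℓ hℓ).le
  have hQnn : 0 ≤ Q := Finset.sum_nonneg fun ℓ hℓ =>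
    mul_nonneg (hμpos ℓ hℓ).le (sq_nonneg _)
  have hAQ : 0 < A * Q := lt_of_lt_of_le (pow_pos hBpos 2) hCS
  have hApos : 0 < A := by
    rcases hAnn.lt_or_eq with h | h
    · exact h
    · exfalso; rw [← h] at hAQ; simp at hAQ
  -- main bound
  have hXeq : (m : ℝ) * (1 - (m : ℝ) / N) ^ 2 / ((1 / (m : ℝ)) * A)
      = ((m : ℝ) * (1 - (m : ℝ) / N)) ^ 2 / A := by
    field_simp
  have hXle : (m : ℝ) * (1 - (m : ℝ) / N) ^ 2 / ((1 / (m : ℝ)) * A) ≤ ∑ u ∈ S, ∑ v, W u v := by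
    rw [hXeq]
    have h1 : ((m : ℝ) * (1 - (m : ℝ) / N)) ^ 2 / A ≤ Q := by
      rw [div_le_iff₀ hApos]
      linarith [hCS]
    have h2 : Q = s ⬝ᵥ L.mulVec s := hQerase.symm
    linarith
  have hsplit : (∑ u ∈ S, ∑ v, W u v) + (∑ u ∈ Sᶜ, ∑ v, W u v) = ∑ u, ∑ v, W u v :=
    Finset.sum_add_sum_compl S _
  linarith
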